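/- Let A be a Novikov algebra over a field k of characteristic zero. Then every term γ_i(A) of the lower central series of A is a two-sided ideal of A. -/

import Mathlib

/-! Induction on `i`. For `y ∈ γ_i` write `[x, y] = x·y − y·x`. Left symmetry gives
`[x, y]·a = x·(y·a) − y·(x·a)` and right commutativity gives `[x, y]·a = (x·a)·y − (y·a)·x`;
adding the two, `2 ([x, y]·a) = [x, y·a] + [x·a, y]`, which lies in `γ_{i+1}` once `γ_i` is an
ideal. Dividing by `2` puts `[x, y]·a` in `γ_{i+1}`, and then `a·[x, y] = [a, [x, y]] + [x, y]·a`
does too, because `[x, y] ∈ γ_i`. -/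

variable {k A : Type*} [Field k] [CharZero k] [AddCommGroup A] [Module k A]

/-- The lower central series of an algebra `(A, mul)`:
`lcs mul 0 = γ₁(A) = A` and `lcs mul (i+1) = γ_{i+2}(A) = [A, γ_{i+1}(A)]`,
the subspace spanned by all commutators `x·y − y·x` with `x ∈ A`, `y ∈ γ_{i+1}(A)`. -/
def lcs (mul : A →ₗ[k] A →ₗ[k] A) : ℕ → Submodule k A
  | 0 => ⊤
  | i + 1 =>
    Submodule.span k {z : A | ∃ x : A, ∃ y ∈ lcs mul i, z = mul x y - mul y x}

section IsTwoSidedIdeal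

variable {R M : Type*} [CommSemiring R] [AddCommMonoid M] [Module R M]
  (mul : M →ₗ[R] M →ₗ[R] M)

def IsTwoSidedIdeal (I : Submodule R M) : Prop :=
  ∀ a, ∀ x ∈ I, mul a x ∈ I ∧ mul x a ∈ I

theorem isTwoSidedIdeal_span {s : Set M}
    (h : ∀ a, ∀ z ∈ s, mul a z ∈ Submodule.span R s ∧ mul z a ∈ Submodule.span R s) :
    IsTwoSidedIdeal mul (Submodule.span R s) := fun a _ hx =>
  ⟨Submodule.span_le (p := (Submodule.span R s).comap (mul a)).mpr (fun z hz => (h a z hz).1) hx,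
    Submodule.span_le (p := (Submodule.span R s).comap (mul.flip a)).mpr
      (fun z hz => (h a z hz).2) hx⟩

end IsTwoSidedIdeal

section Novikov

variable {R M : Type*} [CommRing R] [AddCommGroup M] [Module R M] (mul : M →ₗ[R] M →ₗ[R] M)

theorem commutator_mul_eq_of_leftSymmetric
    (hls : ∀ x y z : M,
      mul x (mul y z) - mul (mul x y) z = mul y (mul x z) - mul (mul y x) z) (x y a : M) :
    mul (mul x y - mul y x) a = mul x (mul y a) - mul y (mul x a) := by
  have h := hls x y a
  rw [map_sub, LinearMap.sub_apply]
  rw [sub_eq_sub_iff_add_eq_add] at h ⊢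
  rw [h, add_comm]

theorem commutator_mul_eq_of_rightCommutative
    (hnov : ∀ x y z : M, mul (mul x y) z = mul (mul x z) y) (x y a : M) :
    mul (mul x y - mul y x) a = mul (mul x a) y - mul (mul y a) x := by
  rw [map_sub, LinearMap.sub_apply, hnov x, hnov y]

theorem two_smul_commutator_mul
    (hls : ∀ x y z : M,
      mul x (mul y z) - mul (mul x y) z = mul y (mul x z) - mul (mul y x) z)
    (hnov : ∀ x y z : M, mul (mul x y) z = mul (mul x z) y) (x y a : M) :
    (2 : R) • mul (mul x y - mul y x) a =
      (mul x (mul y a) - mul (mul y a) x) + (mul (mul x a) y - mul y (mul x a)) := by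
  calc (2 : R) • mul (mul x y - mul y x) a
      = mul (mul x y - mul y x) a + mul (mul x y - mul y x) a := two_smul R _
    _ = (mul x (mul y a) - mul y (mul x a)) + (mul (mul x a) y - mul (mul y a) x) :=
      congrArg₂ (· + ·) (commutator_mul_eq_of_leftSymmetric mul hls x y a)
        (commutator_mul_eq_of_rightCommutative mul hnov x y a)
    _ = (mul x (mul y a) - mul (mul y a) x) + (mul (mul x a) y - mul y (mul x a)) := by abel

end Novikov

omit [CharZero k] in
theorem commutator_mem_lcs_succ {mul : A →ₗ[k] A →ₗ[k] A} {i : ℕ} (x : A) {y : A}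
    (hy : y ∈ lcs mul i) : mul x y - mul y x ∈ lcs mul (i + 1) :=
  Submodule.subset_span ⟨x, y, hy, rfl⟩

theorem isTwoSidedIdeal_lcs (mul : A →ₗ[k] A →ₗ[k] A)
    (hls : ∀ x y z : A,
      mul x (mul y z) - mul (mul x y) z = mul y (mul x z) - mul (mul y x) z)
    (hnov : ∀ x y z : A, mul (mul x y) z = mul (mul x z) y) :
    ∀ i, IsTwoSidedIdeal mul (lcs mul i)
  | 0 => fun _ _ _ => ⟨Submodule.mem_top, Submodule.mem_top⟩
  | i + 1 => by
    have ih := isTwoSidedIdeal_lcs mul hls hnov i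
    refine isTwoSidedIdeal_span mul ?_
    rintro a _ ⟨x, y, hy, rfl⟩
    have hright : mul (mul x y - mul y x) a ∈ lcs mul (i + 1) := by
      rw [← Submodule.smul_mem_iff _ (two_ne_zero : (2 : k) ≠ 0),
        two_smul_commutator_mul mul hls hnov]
      exact Submodule.add_mem _ (commutator_mem_lcs_succ x (ih a y hy).2)
        (commutator_mem_lcs_succ (mul x a) hy)
    have hcomm_mem : mul x y - mul y x ∈ lcs mul i :=
      Submodule.sub_mem _ (ih x y hy).1 (ih x y hy).2
    refine ⟨?_, hright⟩
    rw [← sub_add_cancel (mul a _) (mul (mul x y - mul y x) a)]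
    exact Submodule.add_mem _ (commutator_mem_lcs_succ a hcomm_mem) hright

theorem novikov_lowerCentralSeries_ideal
    (mul : A →ₗ[k] A →ₗ[k] A)
    (hls : ∀ x y z : A,
      mul x (mul y z) - mul (mul x y) z = mul y (mul x z) - mul (mul y x) z)
    (hnov : ∀ x y z : A, mul (mul x y) z = mul (mul x z) y) :
    ∀ i : ℕ, ∀ a : A, ∀ x ∈ lcs mul i, mul a x ∈ lcs mul i ∧ mul x a ∈ lcs mul i :=
  isTwoSidedIdeal_lcs mul hls hnov
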